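/- Let f(y,s) be a smooth function with f_s ≠ 0 satisfying the scalar equation f_ss/(2f_s³) + f_y f_ys − (f_ss f_ys²)/(2f_s³) + (f_ys f_yss)/(2f_s²) + (1/2) f_s f_yy + (f_ss f_yys)/(2f_s²) − f_yyss/(2f_s) = 0. Define q = (e^f/2)(f_y + (1 − f_ys)/f_s), r = (e^{−f}/2)(f_y − (1 − f_ys)/f_s), b = 2q_s, c = 2r_s, a = (b e^{−f} − c e^{f})/2. Then (a,b,c,q,r) satisfy the first-negative-flow AKNS equations: q_s = b/2, r_s = c/2, b_y = 2aq, c_y = 2ar, and a_y + br + cq = 0. -/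

import Mathlib

noncomputable section

/-- Partial derivative in the first variable (y). -/
def py (f : ℝ → ℝ → ℝ) (y s : ℝ) : ℝ := deriv (fun y' => f y' s) y

/-- Partial derivative in the second variable (s). -/
def ps (f : ℝ → ℝ → ℝ) (y s : ℝ) : ℝ := deriv (fun s' => f y s') s

def pY (F : ℝ × ℝ → ℝ) : ℝ × ℝ → ℝ := fun p => fderiv ℝ F p (1, 0)
def pS (F : ℝ × ℝ → ℝ) : ℝ × ℝ → ℝ := fun p => fderiv ℝ F p (0, 1)

lemma pY_contDiff {F : ℝ × ℝ → ℝ} (hF : ContDiff ℝ (⊤ : ℕ∞) F) : ContDiff ℝ (⊤ : ℕ∞) (pY F) :=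
  (hF.fderiv_right (by simp)).clm_apply contDiff_const

lemma pS_contDiff {F : ℝ × ℝ → ℝ} (hF : ContDiff ℝ (⊤ : ℕ∞) F) : ContDiff ℝ (⊤ : ℕ∞) (pS F) :=
  (hF.fderiv_right (by simp)).clm_apply contDiff_const

lemma hasDerivAt_y {F : ℝ × ℝ → ℝ} (hF : ContDiff ℝ (⊤ : ℕ∞) F) (y s : ℝ) :
    HasDerivAt (fun y' => F (y', s)) (pY F (y, s)) y := by
  have h1 : HasFDerivAt F (fderiv ℝ F (y, s)) (y, s) :=
    (hF.differentiable (by simp) (y, s)).hasFDerivAt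
  have h2 : HasDerivAt (fun y' : ℝ => ((y' : ℝ), s)) ((1 : ℝ), (0 : ℝ)) y :=
    HasDerivAt.prodMk (hasDerivAt_id y) (hasDerivAt_const y s)
  exact h1.comp_hasDerivAt y h2

lemma hasDerivAt_s {F : ℝ × ℝ → ℝ} (hF : ContDiff ℝ (⊤ : ℕ∞) F) (y s : ℝ) :
    HasDerivAt (fun s' => F (y, s')) (pS F (y, s)) s := by
  have h1 : HasFDerivAt F (fderiv ℝ F (y, s)) (y, s) :=
    (hF.differentiable (by simp) (y, s)).hasFDerivAt
  have h2 : HasDerivAt (fun s' : ℝ => ((y : ℝ), (s' : ℝ))) ((0 : ℝ), (1 : ℝ)) s :=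
    HasDerivAt.prodMk (hasDerivAt_const s y) (hasDerivAt_id s)
  exact h1.comp_hasDerivAt s h2

lemma pYS_swap {F : ℝ × ℝ → ℝ} (hF : ContDiff ℝ (⊤ : ℕ∞) F) (p : ℝ × ℝ) :
    pY (pS F) p = pS (pY F) p := by
  have hsym : IsSymmSndFDerivAt ℝ F p :=
    hF.contDiffAt.isSymmSndFDerivAt (by simp; exact WithTop.coe_le_coe.mpr le_top)
  have hd : DifferentiableAt ℝ (fderiv ℝ F) p :=
    ((hF.fderiv_right (m := (⊤ : ℕ∞)) (by simp)).differentiable (by simp)).differentiableAt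
  have e1 : pY (pS F) p = fderiv ℝ (fderiv ℝ F) p (1, 0) (0, 1) := by
    show fderiv ℝ (fun x => fderiv ℝ F x (0, 1)) p (1, 0) = _
    rw [fderiv_clm_apply hd (differentiableAt_const _)]
    simp
  have e2 : pS (pY F) p = fderiv ℝ (fderiv ℝ F) p (0, 1) (1, 0) := by
    show fderiv ℝ (fun x => fderiv ℝ F x (1, 0)) p (0, 1) = _
    rw [fderiv_clm_apply hd (differentiableAt_const _)]
    simp
  rw [e1, e2, hsym.eq]

set_option maxHeartbeats 2000000 in
/-- If f is smooth with f_s ≠ 0 and solves the scalar 2-CH equation,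
then q = (e^f/2)(f_y + (1 − f_ys)/f_s), r = (e^{−f}/2)(f_y − (1 − f_ys)/f_s),
b = 2q_s, c = 2r_s, a = (b e^{−f} − c e^{f})/2 satisfy the first-negative-flow
AKNS equations. -/
theorem primary_solution_gives_AKNS
    (f q r a b c : ℝ → ℝ → ℝ)
    (hf : ContDiff ℝ (⊤ : ℕ∞) (fun p : ℝ × ℝ => f p.1 p.2))
    (hfs : ∀ y s, ps f y s ≠ 0)
    (hpde : ∀ y s,
      ps (ps f) y s / (2 * (ps f y s)^3)
      + py f y s * py (ps f) y s
      - ps (ps f) y s * (py (ps f) y s)^2 / (2 * (ps f y s)^3)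
      + py (ps f) y s * py (ps (ps f)) y s / (2 * (ps f y s)^2)
      + (1/2) * ps f y s * py (py f) y s
      + ps (ps f) y s * py (py (ps f)) y s / (2 * (ps f y s)^2)
      - py (py (ps (ps f))) y s / (2 * ps f y s) = 0)
    (hqdef : ∀ y s, q y s =
      Real.exp (f y s) / 2 * (py f y s + (1 - py (ps f) y s) / ps f y s))
    (hrdef : ∀ y s, r y s =
      Real.exp (-f y s) / 2 * (py f y s - (1 - py (ps f) y s) / ps f y s))
    (hbdef : ∀ y s, b y s = 2 * ps q y s)
    (hcdef : ∀ y s, c y s = 2 * ps r y s)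
    (hadef : ∀ y s, a y s =
      (b y s * Real.exp (-f y s) - c y s * Real.exp (f y s)) / 2) :
    ∀ y s,
      ps q y s = b y s / 2 ∧
      ps r y s = c y s / 2 ∧
      py b y s = 2 * a y s * q y s ∧
      py c y s = 2 * a y s * r y s ∧
      py a y s + b y s * r y s + c y s * q y s = 0 := by
  set F : ℝ × ℝ → ℝ := fun p : ℝ × ℝ => f p.1 p.2 with hFdef
  have hF : ContDiff ℝ (⊤ : ℕ∞) F := hf
  have key : ∀ G : ℝ × ℝ → ℝ, ContDiff ℝ (⊤ : ℕ∞) G → ∀ g : ℝ → ℝ → ℝ,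
      (∀ y s, g y s = G (y, s)) →
      (∀ y s, py g y s = pY G (y, s)) ∧ (∀ y s, ps g y s = pS G (y, s)) := by
    intro G hG g hg
    refine ⟨fun y s => ?_, fun y s => ?_⟩
    · have hgy : (fun y' => g y' s) = fun y' => G (y', s) := funext fun y' => hg y' s
      rw [py, hgy]
      exact (hasDerivAt_y hG y s).deriv
    · have hgs : (fun s' => g y s') = fun s' => G (y, s') := funext fun s' => hg y s'
      rw [ps, hgs]
      exact (hasDerivAt_s hG y s).deriv
  have hS := pS_contDiff hF
  have hY := pY_contDiff hF
  have hSS := pS_contDiff hS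
  have hYS := pY_contDiff hS
  have hYY := pY_contDiff hY
  have hYSS := pY_contDiff hSS
  obtain ⟨id_y, id_s⟩ := key F hF f (fun _ _ => rfl)
  obtain ⟨id_ys, id_ss⟩ := key (pS F) hS (ps f) id_s
  obtain ⟨id_yy, _⟩ := key (pY F) hY (py f) id_y
  obtain ⟨id_yss, _⟩ := key (pS (pS F)) hSS (ps (ps f)) id_ss
  obtain ⟨id_yys, _⟩ := key (pY (pS F)) hYS (py (ps f)) id_ys
  obtain ⟨id_yyss, _⟩ := key (pY (pS (pS F))) hYSS (py (ps (ps f))) id_yss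
  have hv : ∀ y s : ℝ, pS F (y, s) ≠ 0 := fun y s => by rw [← id_s]; exact hfs y s
  have sw1 : ∀ y s : ℝ, pS (pY F) (y, s) = pY (pS F) (y, s) :=
    fun y s => (pYS_swap hF (y, s)).symm
  have sw2 : ∀ y s : ℝ, pS (pY (pS F)) (y, s) = pY (pS (pS F)) (y, s) :=
    fun y s => (pYS_swap hS (y, s)).symm
  -- explicit formula for b
  have hbF : ∀ y s : ℝ, b y s =
      Real.exp (F (y, s)) * (pS F (y, s) * pY F (y, s) + 1
        - pY (pS (pS F)) (y, s) / pS F (y, s)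
        - (1 - pY (pS F) (y, s)) * pS (pS F) (y, s) / (pS F (y, s)) ^ 2) := by
    intro y s
    have hq' : (fun s' => q y s') = fun s' =>
        Real.exp (F (y, s')) / 2 * (pY F (y, s') + (1 - pY (pS F) (y, s')) / pS F (y, s')) :=
      funext fun s' => by rw [hqdef, id_y, id_s, id_ys]
    have h2 : HasDerivAt (fun s' => Real.exp (F (y, s')) / 2)
        (Real.exp (F (y, s)) * pS F (y, s) / 2) s := ((hasDerivAt_s hF y s).exp).div_const 2
    have h3 := hasDerivAt_s hY y s
    have h4 := (hasDerivAt_s hYS y s).const_sub 1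
    have h5 := hasDerivAt_s hS y s
    have hD := h2.mul (h3.add (h4.div h5 (hv y s)))
    rw [hbdef, show ps q y s = deriv (fun s' => q y s') s from rfl, hq']
    erw [hD.deriv]
    simp only [Pi.mul_apply, Pi.add_apply, Pi.sub_apply, Pi.div_apply, Pi.pow_apply, Pi.neg_apply]
    rw [sw1, sw2]
    have hvne := hv y s
    field_simp
    ring
  have hcF : ∀ y s : ℝ, c y s =
      Real.exp (-F (y, s)) * (-(pS F (y, s) * pY F (y, s)) + 1
        + pY (pS (pS F)) (y, s) / pS F (y, s)
        + (1 - pY (pS F) (y, s)) * pS (pS F) (y, s) / (pS F (y, s)) ^ 2) := by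
    intro y s
    have hr' : (fun s' => r y s') = fun s' =>
        Real.exp (-F (y, s')) / 2 * (pY F (y, s') - (1 - pY (pS F) (y, s')) / pS F (y, s')) :=
      funext fun s' => by rw [hrdef, id_y, id_s, id_ys]
    have h2 : HasDerivAt (fun s' => Real.exp (-F (y, s')) / 2)
        (Real.exp (-F (y, s)) * -pS F (y, s) / 2) s :=
      (((hasDerivAt_s hF y s).neg).exp).div_const 2
    have h3 := hasDerivAt_s hY y s
    have h4 := (hasDerivAt_s hYS y s).const_sub 1
    have h5 := hasDerivAt_s hS y s
    have hD := h2.mul (h3.sub (h4.div h5 (hv y s)))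
    rw [hcdef, show ps r y s = deriv (fun s' => r y s') s from rfl, hr']
    erw [hD.deriv]
    simp only [Pi.mul_apply, Pi.add_apply, Pi.sub_apply, Pi.div_apply, Pi.pow_apply, Pi.neg_apply]
    rw [sw1, sw2]
    have hvne := hv y s
    field_simp
    ring
  have haF : ∀ y s : ℝ, a y s =
      pS F (y, s) * pY F (y, s)
        - pY (pS (pS F)) (y, s) / pS F (y, s)
        - (1 - pY (pS F) (y, s)) * pS (pS F) (y, s) / (pS F (y, s)) ^ 2 := by
    intro y s
    rw [hadef, hbF, hcF, show f y s = F (y, s) from rfl, Real.exp_neg]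
    have hvne := hv y s
    have hEne := Real.exp_ne_zero (F (y, s))
    field_simp
    ring
  have hqF : ∀ y s : ℝ, q y s =
      Real.exp (F (y, s)) / 2 * (pY F (y, s) + (1 - pY (pS F) (y, s)) / pS F (y, s)) :=
    fun y s => by rw [hqdef, id_y, id_s, id_ys]
  have hrF : ∀ y s : ℝ, r y s =
      Real.exp (-F (y, s)) / 2 * (pY F (y, s) - (1 - pY (pS F) (y, s)) / pS F (y, s)) :=
    fun y s => by rw [hrdef, id_y, id_s, id_ys]
  intro y s
  -- cleared PDE
  have h0 := hpde y s
  rw [id_ss y s, id_s y s, id_y y s, id_ys y s, id_yss y s, id_yy y s, id_yys y s,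
    id_yyss y s] at h0
  refine ⟨by rw [hbdef]; ring, by rw [hcdef]; ring, ?_, ?_, ?_⟩
  · -- py b = 2 a q
    have hb' : (fun y' => b y' s) = fun y' =>
        Real.exp (F (y', s)) * (pS F (y', s) * pY F (y', s) + 1
          - pY (pS (pS F)) (y', s) / pS F (y', s)
          - (1 - pY (pS F) (y', s)) * pS (pS F) (y', s) / (pS F (y', s)) ^ 2) :=
      funext fun y' => hbF y' s
    have kE := (hasDerivAt_y hF y s).exp
    have ku := hasDerivAt_y hY y s
    have kv := hasDerivAt_y hS y s
    have kw := hasDerivAt_y hYS y s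
    have kp := hasDerivAt_y hSS y s
    have kh := hasDerivAt_y hYSS y s
    have kz := hasDerivAt_y (pY_contDiff hYSS) y s
    have hD := kE.mul ((((kv.mul ku).add_const 1).sub
        (kh.div kv (hv y s))).sub
        (((kw.const_sub 1).mul kp).div (kv.pow 2) (pow_ne_zero 2 (hv y s))))
    rw [show py b y s = deriv (fun y' => b y' s) y from rfl, hb']
    erw [hD.deriv]
    simp only [Pi.mul_apply, Pi.add_apply, Pi.sub_apply, Pi.div_apply, Pi.pow_apply, Pi.neg_apply]
    rw [haF y s, hqF y s]
    have hvne := hv y s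
    have hEne := Real.exp_ne_zero (F (y, s))
    field_simp at h0 ⊢
    linear_combination (pS F (y, s)) * h0
  · -- py c = 2 a r
    have hc' : (fun y' => c y' s) = fun y' =>
        Real.exp (-F (y', s)) * (-(pS F (y', s) * pY F (y', s)) + 1
          + pY (pS (pS F)) (y', s) / pS F (y', s)
          + (1 - pY (pS F) (y', s)) * pS (pS F) (y', s) / (pS F (y', s)) ^ 2) :=
      funext fun y' => hcF y' s
    have kE := ((hasDerivAt_y hF y s).neg).exp
    have ku := hasDerivAt_y hY y s
    have kv := hasDerivAt_y hS y s
    have kw := hasDerivAt_y hYS y s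
    have kp := hasDerivAt_y hSS y s
    have kh := hasDerivAt_y hYSS y s
    have hD := kE.mul ((((kv.mul ku).neg.add_const 1).add
        (kh.div kv (hv y s))).add
        (((kw.const_sub 1).mul kp).div (kv.pow 2) (pow_ne_zero 2 (hv y s))))
    rw [show py c y s = deriv (fun y' => c y' s) y from rfl, hc']
    erw [hD.deriv]
    simp only [Pi.mul_apply, Pi.add_apply, Pi.sub_apply, Pi.div_apply, Pi.pow_apply, Pi.neg_apply]
    rw [haF y s, hrF y s]
    have hvne := hv y s
    have hEne := Real.exp_ne_zero (-F (y, s))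
    field_simp at h0 ⊢
    linear_combination (-pS F (y, s)) * h0
  · -- py a + b r + c q = 0
    have ha' : (fun y' => a y' s) = fun y' =>
        pS F (y', s) * pY F (y', s)
          - pY (pS (pS F)) (y', s) / pS F (y', s)
          - (1 - pY (pS F) (y', s)) * pS (pS F) (y', s) / (pS F (y', s)) ^ 2 :=
      funext fun y' => haF y' s
    have ku := hasDerivAt_y hY y s
    have kv := hasDerivAt_y hS y s
    have kw := hasDerivAt_y hYS y s
    have kp := hasDerivAt_y hSS y s
    have kh := hasDerivAt_y hYSS y s
    have hD := ((kv.mul ku).sub (kh.div kv (hv y s))).sub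
        (((kw.const_sub 1).mul kp).div (kv.pow 2) (pow_ne_zero 2 (hv y s)))
    rw [show py a y s = deriv (fun y' => a y' s) y from rfl, ha']
    erw [hD.deriv]
    simp only [Pi.mul_apply, Pi.add_apply, Pi.sub_apply, Pi.div_apply, Pi.pow_apply, Pi.neg_apply]
    rw [hbF y s, hcF y s, hqF y s, hrF y s, Real.exp_neg]
    have hvne := hv y s
    have hEne := Real.exp_ne_zero (F (y, s))
    have hEne' := Real.exp_ne_zero (-F (y, s))
    field_simp at h0 ⊢
    linear_combination (2 * pS F (y, s)) * h0
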